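/- arXiv:0806.0282 — 2 statements merged into one kernel-verified Lean document; each statement's English description precedes it below -/
import Mathlib

section
/- Let v be an x-vertex and u a 0-vertex that are K-adjacent (some K-edge joins v and u). Then for every feasible solution x*, the output values of the local algorithm satisfy x_v + x_u ≥ (1 − 1/R)·ω(x*), where x_u = 0. -/
/-- An undirected multigraph with two-coloured vertices and two-coloured edges.
`isX v` means `v` is an x-vertex (otherwise `v` is a 0-vertex);
`isK e` means `e` is a K-edge (otherwise `e` is an I-edge). -/
structure ColoredMultigraph (V : Type) (E : Type) where
  ends : E → Sym2 V
  isX : V → Prop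
  isK : E → Prop

namespace ColoredMultigraph

variable {V E : Type} (G : ColoredMultigraph V E)

/-- Edge `e` joins vertices `a` and `b`. -/
def Joins (e : E) (a b : V) : Prop := G.ends e = s(a, b)

/-- `AltWalk G v c c' u n` : there is an alternating walk from `v` to `u` whose
first edge has colour `c` (`true` = K-edge, `false` = I-edge), whose last edge
has colour `c'`, and whose K-length (number of K-edges) is `n`. -/
inductive AltWalk : V → Bool → Bool → V → ℕ → Prop
  | single (e : E) (a b : V) (c : Bool) :
      G.Joins e a b → (G.isK e ↔ c = true) → AltWalk a c c b (cond c 1 0)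
  | cons (e : E) (a b : V) (c c' : Bool) (u : V) (n : ℕ) :
      G.Joins e a b → (G.isK e ↔ c = true) → AltWalk b (!c) c' u n →
      AltWalk a c c' u (cond c 1 0 + n)

/-- `a(v,X,Y,0)` : the minimum K-length of a `(v,X,Y,0)`-walk, that is, a walk
from `v` to some 0-vertex starting with an X-edge and ending with a Y-edge
(`∞` if no such walk exists). -/
noncomputable def walkInf (v : V) (X Y : Bool) : ℕ∞ :=
  sInf {n : ℕ∞ | ∃ m : ℕ, n = m ∧ ∃ u, G.AltWalk v X Y u m ∧ ¬ G.isX u}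

/-- `A(v,X)` : the maximum K-length of an alternating walk starting at `v` with
an X-edge (`∞` if walks of arbitrarily large K-length exist). -/
noncomputable def walkSup (v : V) (X : Bool) : ℕ∞ :=
  sSup {n : ℕ∞ | ∃ m : ℕ, n = m ∧ ∃ Y u, G.AltWalk v X Y u m}

/-- `b(v,X,Y,0) = min {a(v,X,Y,0), R}`. -/
noncomputable def bnd (R : ℕ) (v : V) (X Y : Bool) : ℕ∞ :=
  min (G.walkInf v X Y) (R : ℕ∞)

/-- `B(v,X) = min {A(v,X), R}`. -/
noncomputable def Bnd (R : ℕ) (v : V) (X : Bool) : ℕ∞ :=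
  min (G.walkSup v X) (R : ℕ∞)

/-- The value `p_v` chosen by the local algorithm:
`p_v = b(v,I,K,0)` if `a(v,K,K,0) ≤ R`, and
`p_v = min {b(v,I,K,0), B(v,K)}` otherwise. -/
noncomputable def pv (R : ℕ) (v : V) : ℕ∞ :=
  if G.walkInf v true true ≤ (R : ℕ∞) then G.bnd R v false true
  else min (G.bnd R v false true) (G.Bnd R v true)

/-- The value `q_v` chosen by the local algorithm:
`q_v = b(v,K,K,0)` if `a(v,I,K,0) ≤ R`, and
`q_v = min {b(v,K,K,0), B(v,I)}` otherwise. -/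
noncomputable def qv (R : ℕ) (v : V) : ℕ∞ :=
  if G.walkInf v false true ≤ (R : ℕ∞) then G.bnd R v true true
  else min (G.bnd R v true true) (G.Bnd R v false)

open Classical in
/-- The output value of the local algorithm: `p_v / (p_v + q_v)` at an x-vertex
`v`, and `0` at a 0-vertex. -/
noncomputable def xval (R : ℕ) (v : V) : ℝ :=
  if G.isX v then
    ((G.pv R v).toNat : ℝ) / (((G.pv R v).toNat : ℝ) + ((G.qv R v).toNat : ℝ))
  else 0

/-- Structural assumptions: every x-vertex is incident to at least one K-edge
and at least one I-edge, every 0-vertex is incident to exactly one edge, and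
every edge has at least one x-vertex endpoint. -/
def WellFormed : Prop :=
  (∀ v, G.isX v → ∃ e, v ∈ G.ends e ∧ G.isK e) ∧
  (∀ v, G.isX v → ∃ e, v ∈ G.ends e ∧ ¬ G.isK e) ∧
  (∀ v, ¬ G.isX v → ∃! e, v ∈ G.ends e) ∧
  (∀ e a b, G.Joins e a b → G.isX a ∨ G.isX b)

/-- A feasible solution: nonnegative, zero at 0-vertices, and satisfying
`x a + x b ≤ 1` for every I-edge `{a, b}`. -/
def Feasible (x : V → ℝ) : Prop :=
  (∀ a, 0 ≤ x a) ∧ (∀ a, ¬ G.isX a → x a = 0) ∧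
  (∀ e a b, G.Joins e a b → ¬ G.isK e → x a + x b ≤ 1)

/-- The utility `ω(x)` of a solution: the minimum (infimum) over K-edges
`{a, b}` of `x a + x b`. -/
noncomputable def utility (x : V → ℝ) : ℝ :=
  sInf {r : ℝ | ∃ e a b, G.Joins e a b ∧ G.isK e ∧ r = x a + x b}

end ColoredMultigraph

/-!
Since the 0-vertex `u` hangs from `v` by a K-edge, `a(v,K,K,0) = 1`; hence `p_v = b(v,I,K,0)`
and `q_v ≤ 1`, so `x_v ≥ p_v / (p_v + 1)`. If `p_v = R`, then `R / (R + 1) ≥ 1 - 1/R`, and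
`ω ≤ x*_v ≤ 1` because `v` also lies on an I-edge. Otherwise `p_v = m` is the K-length of a
`(v,I,K,0)`-walk; telescoping the I-constraints and the K-bounds `ω ≤ x*_a + x*_b` along it gives
`x*_v ≤ m (1 - ω)`, which together with `ω ≤ x*_v + x*_u = x*_v` yields `ω ≤ m / (m + 1)`.
-/

theorem one_sub_one_div_le_div_add_one {r : ℝ} (hr : 0 < r) : 1 - 1 / r ≤ r / (r + 1) := by
  rw [one_sub_div hr.ne', div_le_div_iff₀ hr (by linarith)]
  nlinarith

namespace ColoredMultigraph

variable {V E : Type} {G : ColoredMultigraph V E}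

/-- Summing the I-constraints `x a + x b ≤ 1` and the K-bounds `ω ≤ x a + x b` along the walk
telescopes; the right-hand side is (number of I-edges of the walk) `- n * ω`. -/
theorem AltWalk.alternating_sum_le {x : V → ℝ} {ω : ℝ}
    (hI : ∀ e a b, G.Joins e a b → ¬ G.isK e → x a + x b ≤ 1)
    (hK : ∀ e a b, G.Joins e a b → G.isK e → ω ≤ x a + x b)
    {a w : V} {c c' : Bool} {n : ℕ} (h : G.AltWalk a c c' w n) :
    (cond c (-1) 1 : ℝ) * x a + (cond c' (-1) 1 : ℝ) * x w
      ≤ n + (cond c 0 1 : ℝ) + (cond c' 0 1 : ℝ) - 1 - n * ω := by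
  induction h with
  | single e a b c hab hc =>
    cases c
    · have := hI e a b hab (by simpa using hc)
      simp only [cond_false, Nat.cast_zero]
      linarith
    · have := hK e a b hab (hc.mpr rfl)
      simp only [cond_true, Nat.cast_one]
      linarith
  | cons e a b c c' w n hab hc _ ih =>
    cases c
    · have := hI e a b hab (by simpa using hc)
      simp only [Bool.not_false, cond_true, cond_false, zero_add] at ih ⊢
      linarith
    · have := hK e a b hab (hc.mpr rfl)
      simp only [Bool.not_true, cond_true, cond_false, Nat.cast_add, Nat.cast_one] at ih ⊢
      linarith

theorem exists_altWalk_of_walkInf_ne_top {v : V} {X Y : Bool} (h : G.walkInf v X Y ≠ ⊤) :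
    ∃ w, G.AltWalk v X Y w (G.walkInf v X Y).toNat ∧ ¬ G.isX w := by
  have hne :
      {n : ℕ∞ | ∃ m : ℕ, n = m ∧ ∃ w, G.AltWalk v X Y w m ∧ ¬ G.isX w}.Nonempty :=
    Set.nonempty_iff_ne_empty.mpr fun hemp => h (by rw [walkInf, hemp, sInf_empty])
  obtain ⟨m, hm, hwalk⟩ := csInf_mem hne
  rw [walkInf, hm, ENat.toNat_natCast]
  exact hwalk

theorem walkInf_le_one_of_joins {e : E} {v u : V} (he : G.Joins e v u) (hK : G.isK e)
    (hu : ¬ G.isX u) : G.walkInf v true true ≤ 1 :=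
  sInf_le ⟨1, Nat.cast_one.symm, u, AltWalk.single e v u true he (iff_of_true hK rfl), hu⟩

namespace Feasible

variable {x : V → ℝ} (hx : G.Feasible x)
include hx

theorem utility_nonneg : 0 ≤ G.utility x :=
  Real.sInf_nonneg fun _ ⟨_, a, b, _, _, hr⟩ => hr ▸ add_nonneg (hx.1 a) (hx.1 b)

theorem utility_le {e : E} {a b : V} (he : G.Joins e a b) (hK : G.isK e) :
    G.utility x ≤ x a + x b :=
  csInf_le ⟨0, fun _ ⟨_, a, b, _, _, hr⟩ => hr ▸ add_nonneg (hx.1 a) (hx.1 b)⟩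
    ⟨e, a, b, he, hK, rfl⟩

theorem le_one_of_mem_ends {e : E} {a : V} (ha : a ∈ G.ends e) (hI : ¬ G.isK e) : x a ≤ 1 := by
  obtain ⟨b, hab⟩ := Sym2.mem_iff_exists.mp ha
  linarith [hx.2.2 e a b hab hI, hx.1 b]

theorem sub_le_of_altWalk {v w : V} {m : ℕ} (h : G.AltWalk v false true w m) :
    x v - x w ≤ m * (1 - G.utility x) := by
  have := h.alternating_sum_le hx.2.2 fun _ _ _ => hx.utility_le
  simp only [cond_false, cond_true] at this
  linarith

theorem one_sub_one_div_mul_utility_le {R : ℕ} (hR : 0 < R) {e e' : E} {v u : V}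
    (he : G.Joins e v u) (hK : G.isK e) (hu : ¬ G.isX u) (he' : v ∈ G.ends e')
    (hI : ¬ G.isK e') :
    (1 - 1 / (R : ℝ)) * G.utility x ≤
      (G.bnd R v false true).toNat / ((G.bnd R v false true).toNat + 1 : ℝ) := by
  by_cases hinf : G.walkInf v false true ≤ R
  · obtain ⟨w, hwalk, hw⟩ := exists_altWalk_of_walkInf_ne_top (ne_top_of_le_ne_top
      (ENat.natCast_ne_top R) hinf)
    rw [bnd, min_eq_left hinf]
    set m := (G.walkInf v false true).toNat
    have hωv : G.utility x ≤ x v := by linarith [hx.utility_le he hK, hx.2.1 u hu]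
    have hvm : x v ≤ m * (1 - G.utility x) := by
      linarith [hx.sub_le_of_altWalk hwalk, hx.2.1 w hw]
    have hω0 := hx.utility_nonneg
    have hRinv : 0 ≤ 1 / (R : ℝ) := by positivity
    calc (1 - 1 / (R : ℝ)) * G.utility x ≤ G.utility x := by nlinarith
      _ ≤ m / (m + 1) := by rw [le_div_iff₀ (by positivity)]; linarith
  · rw [bnd, min_eq_right (le_of_not_ge hinf), ENat.toNat_natCast]
    have hω1 : G.utility x ≤ 1 := by
      linarith [hx.utility_le he hK, hx.2.1 u hu, hx.le_one_of_mem_ends he' hI]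
    have hRpos : (0 : ℝ) < R := Nat.cast_pos.mpr hR
    calc (1 - 1 / (R : ℝ)) * G.utility x ≤ 1 - 1 / R :=
          mul_le_of_le_one_right (sub_nonneg.mpr ((div_le_one hRpos).mpr (by exact_mod_cast hR)))
            hω1
      _ ≤ R / (R + 1) := one_sub_one_div_le_div_add_one hRpos

end Feasible

theorem pv_eq_bnd_of_joins {R : ℕ} (hR : 1 ≤ R) {e : E} {v u : V} (he : G.Joins e v u)
    (hK : G.isK e) (hu : ¬ G.isX u) : G.pv R v = G.bnd R v false true :=
  if_pos ((walkInf_le_one_of_joins he hK hu).trans (by exact_mod_cast hR))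

theorem qv_le_one_of_joins {R : ℕ} {e : E} {v u : V} (he : G.Joins e v u) (hK : G.isK e)
    (hu : ¬ G.isX u) : G.qv R v ≤ 1 := by
  have hb : G.bnd R v true true ≤ 1 := (min_le_left _ _).trans (walkInf_le_one_of_joins he hK hu)
  unfold qv
  split_ifs
  · exact hb
  · exact (min_le_left _ _).trans hb

theorem div_add_one_le_xval {R : ℕ} {v : V} (hv : G.isX v) (hq : G.qv R v ≤ 1) :
    (G.pv R v).toNat / ((G.pv R v).toNat + 1 : ℝ) ≤ G.xval R v := by
  rw [xval, if_pos hv]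
  set p := (G.pv R v).toNat
  have hq' : ((G.qv R v).toNat : ℝ) ≤ 1 := by
    exact_mod_cast (ENat.toNat_le_toNat hq ENat.one_ne_top).trans_eq ENat.toNat_one
  rcases Nat.eq_zero_or_pos p with hp | hp
  · simp [hp]
  · exact div_le_div_of_nonneg_left (Nat.cast_nonneg p) (by positivity) (by linarith)

end ColoredMultigraph

/-- Let `v` be an x-vertex and `u` a 0-vertex that are
K-adjacent. Then for every feasible solution `x*`, the output values of the
local algorithm satisfy `x_v + x_u ≥ (1 − 1/R) * ω(x*)`, where `x_u = 0`. -/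
theorem stmt_12 {V E : Type} (G : ColoredMultigraph V E) (hG : G.WellFormed)
    (R : ℕ) (hR : 1 ≤ R) (v u : V) (hv : G.isX v) (hu : ¬ G.isX u)
    (hadj : ∃ e, G.Joins e v u ∧ G.isK e)
    (xstar : V → ℝ) (hxstar : G.Feasible xstar) :
    G.xval R u = 0 ∧
      (1 - 1 / (R : ℝ)) * G.utility xstar ≤ G.xval R v + G.xval R u := by
  obtain ⟨e, he, hK⟩ := hadj
  obtain ⟨e', he', hI⟩ := hG.2.1 v hv
  have hxu : G.xval R u = 0 := if_neg hu
  refine ⟨hxu, ?_⟩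
  rw [hxu, add_zero]
  calc (1 - 1 / (R : ℝ)) * G.utility xstar
      ≤ (G.pv R v).toNat / ((G.pv R v).toNat + 1 : ℝ) := by
        rw [ColoredMultigraph.pv_eq_bnd_of_joins hR he hK hu]
        exact hxstar.one_sub_one_div_mul_utility_le hR he hK hu he' hI
    _ ≤ G.xval R v :=
      ColoredMultigraph.div_add_one_le_xval hv (ColoredMultigraph.qv_le_one_of_joins he hK hu)
end

section
/- Let v and u be K-adjacent x-vertices (some K-edge joins v and u), and suppose a(v, K, K, 0) ≤ R and a(v, I, K, 0) > R. Then for every feasible solution x*, the output values of the local algorithm satisfy x_v + x_u ≥ (1 − 1/R)·ω(x*). -/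
namespace ColoredMultigraph

variable {V E : Type} {G : ColoredMultigraph V E}

lemma joins_symm' {e : E} {a b : V} (h : G.Joins e a b) : G.Joins e b a := by
  unfold Joins at *; rw [h, Sym2.eq_swap]

lemma altWalk_last' {a : V} {c c' : Bool} {w : V} {n : ℕ}
    (h : G.AltWalk a c c' w n) : ∃ e b, G.Joins e b w ∧ (G.isK e ↔ c' = true) := by
  induction h with
  | single e a b c hj hk => exact ⟨e, a, hj, hk⟩
  | cons e a b c c' u n hj hk h ih => exact ih

lemma walkInf_prepend' {e : E} {v u : V} (hj : G.Joins e v u) (hk : G.isK e) :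
    G.walkInf v true true ≤ G.walkInf u false true + 1 := by
  by_cases hne : {n : ℕ∞ | ∃ m : ℕ, n = m ∧ ∃ w, G.AltWalk u false true w m ∧ ¬ G.isX w}.Nonempty
  · obtain ⟨m, hm, w, hw, hxw⟩ := csInf_mem hne
    have hwalk : G.AltWalk v true true w (1 + m) := by
      have := AltWalk.cons e v u true true w m hj (by simp [hk]) (by simpa using hw)
      simpa using this
    have h1 : G.walkInf v true true ≤ ((1 + m : ℕ) : ℕ∞) :=
      sInf_le ⟨1 + m, rfl, w, hwalk, hxw⟩
    have h2 : G.walkInf u false true = (m : ℕ∞) := hm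
    rw [h2]
    refine h1.trans (le_of_eq ?_)
    push_cast; ring
  · rw [Set.not_nonempty_iff_eq_empty] at hne
    rw [walkInf, walkInf, hne, sInf_empty]
    simp

lemma walkSup_prepend' {e : E} {v u : V} (hj : G.Joins e u v) (hk : G.isK e) :
    G.walkSup v false ≤ G.walkSup u true := by
  apply sSup_le
  rintro x ⟨m, rfl, Y, w, hw⟩
  have hwalk : G.AltWalk u true Y w (1 + m) := by
    have := AltWalk.cons e u v true Y w m hj (by simp [hk]) (by simpa using hw)
    simpa using this
  calc (m : ℕ∞) ≤ ((1 + m : ℕ) : ℕ∞) := by push_cast; simp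
    _ ≤ G.walkSup u true := le_sSup ⟨1 + m, rfl, Y, w, hwalk⟩

end ColoredMultigraph

/-- core real inequality -/
lemma stmt14_real_ineq {R p : ℝ} (hR : 1 ≤ R) (hp : 0 ≤ p) :
    1 - 1 / R ≤ R / (R + (p + 1)) + p / (p + R) := by
  have hR0 : (0 : ℝ) < R := by linarith
  have hA : (0 : ℝ) < R + (p + 1) := by linarith
  have hB : (0 : ℝ) < p + R := by linarith
  have e1 : 1 - 1 / R = (R - 1) / R := by field_simp
  rw [e1, div_add_div _ _ hA.ne' hB.ne', div_le_div_iff₀ hR0 (by positivity)]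
  nlinarith [sq_nonneg p, mul_nonneg hp hR0.le, mul_nonneg (mul_nonneg hp hp) hR0.le,
    mul_nonneg hp (mul_nonneg hR0.le hR0.le)]

/-- Let `v` and `u` be K-adjacent x-vertices, and suppose
`a(v,K,K,0) ≤ R` and `a(v,I,K,0) > R`. Then for every feasible solution `x*`,
the output values of the local algorithm satisfy
`x_v + x_u ≥ (1 − 1/R) * ω(x*)`. -/
theorem stmt_14 {V E : Type} (G : ColoredMultigraph V E) (hG : G.WellFormed)
    (R : ℕ) (hR : 1 ≤ R) (v u : V) (hv : G.isX v) (hu : G.isX u)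
    (hadj : ∃ e, G.Joins e v u ∧ G.isK e)
    (haKK : G.walkInf v true true ≤ (R : ℕ∞))
    (haIK : (R : ℕ∞) < G.walkInf v false true)
    (xstar : V → ℝ) (hxstar : G.Feasible xstar) :
    (1 - 1 / (R : ℝ)) * G.utility xstar ≤ G.xval R v + G.xval R u := by
    classical
  obtain ⟨e, hevu, heK⟩ := hadj
  have heuv : G.Joins e u v := ColoredMultigraph.joins_symm' hevu
  have hR0 : (0 : ℝ) < (R : ℝ) := by exact_mod_cast Nat.lt_of_lt_of_le Nat.zero_lt_one hR
  have hRtop : (R : ℕ∞) ≠ ⊤ := (ENat.coe_lt_top R).ne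
  -- p_v = R
  have hpv : G.pv R v = (R : ℕ∞) := by
    rw [ColoredMultigraph.pv, if_pos haKK, ColoredMultigraph.bnd]
    exact min_eq_right haIK.le
  -- q_v in the else branch
  have hqv_def : G.qv R v = min (G.bnd R v true true) (G.Bnd R v false) := by
    rw [ColoredMultigraph.qv, if_neg (not_le.mpr haIK)]
  have hqv_le_R : G.qv R v ≤ (R : ℕ∞) := by
    rw [hqv_def]; exact le_trans (min_le_left _ _) (min_le_right _ _)
  have hqu_le_R : G.qv R u ≤ (R : ℕ∞) := by
    rw [ColoredMultigraph.qv]; split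
    · exact min_le_right _ _
    · exact le_trans (min_le_left _ _) (min_le_right _ _)
  have hpu_le_R : G.pv R u ≤ (R : ℕ∞) := by
    rw [ColoredMultigraph.pv]; split
    · exact min_le_right _ _
    · exact le_trans (min_le_left _ _) (min_le_right _ _)
  -- key: q_v ≤ p_u + 1
  have hprep_inf : G.walkInf v true true ≤ G.walkInf u false true + 1 :=
    ColoredMultigraph.walkInf_prepend' hevu heK
  have hprep_sup : G.walkSup v false ≤ G.walkSup u true :=
    ColoredMultigraph.walkSup_prepend' heuv heK
  have hfirst : G.bnd R v true true ≤ G.bnd R u false true + 1 := by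
    rw [ColoredMultigraph.bnd, ColoredMultigraph.bnd, ← min_add_add_right]
    exact le_min (le_trans (min_le_left _ _) hprep_inf)
      (le_trans (min_le_right _ _) le_self_add)
  have hkey : G.qv R v ≤ G.pv R u + 1 := by
    rw [hqv_def, ColoredMultigraph.pv]
    split
    · exact le_trans (min_le_left _ _) hfirst
    · rw [← min_add_add_right]
      refine le_min (le_trans (min_le_left _ _) hfirst) ?_
      refine le_trans (min_le_right _ _) (le_trans ?_ le_self_add)
      rw [ColoredMultigraph.Bnd, ColoredMultigraph.Bnd]
      exact min_le_min hprep_sup le_rfl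
  -- to naturals
  set P := (G.pv R u).toNat with hP
  set Q := (G.qv R u).toNat with hQ
  set s' := (G.qv R v).toNat with hs'
  have hpu_ne : G.pv R u ≠ ⊤ := (lt_of_le_of_lt hpu_le_R (ENat.coe_lt_top R)).ne
  have hQ_le : Q ≤ R := ENat.toNat_le_of_le_coe hqu_le_R
  have hs'_le : s' ≤ P + 1 := by
    have h2 : G.pv R u + 1 = ((P + 1 : ℕ) : ℕ∞) := by
      rw [← ENat.coe_toNat hpu_ne]; push_cast; ring
    exact ENat.toNat_le_of_le_coe (hkey.trans_eq h2)
  -- x-values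
  have hxv : G.xval R v = (R : ℝ) / ((R : ℝ) + (s' : ℝ)) := by
    rw [ColoredMultigraph.xval, if_pos hv, hpv, ENat.toNat_coe]
  have hxu : G.xval R u = (P : ℝ) / ((P : ℝ) + (Q : ℝ)) := by
    rw [ColoredMultigraph.xval, if_pos hu]
  -- utility bounds
  have hSbdd : BddBelow {r : ℝ | ∃ e a b, G.Joins e a b ∧ G.isK e ∧ r = xstar a + xstar b} := by
    refine ⟨0, ?_⟩
    rintro r ⟨e, a, b, -, -, rfl⟩
    exact add_nonneg (hxstar.1 a) (hxstar.1 b)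
  have hw0 : 0 ≤ G.utility xstar := by
    apply Real.sInf_nonneg
    rintro r ⟨e, a, b, -, -, rfl⟩
    exact add_nonneg (hxstar.1 a) (hxstar.1 b)
  have hw1 : G.utility xstar ≤ 1 := by
    have hne : {n : ℕ∞ | ∃ m : ℕ, n = m ∧ ∃ w, G.AltWalk v true true w m ∧ ¬ G.isX w}.Nonempty := by
      by_contra h
      rw [Set.not_nonempty_iff_eq_empty] at h
      rw [ColoredMultigraph.walkInf, h, sInf_empty, top_le_iff] at haKK
      exact hRtop haKK
    obtain ⟨x, m, hxm, w, hwk, hw0x⟩ := hne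
    obtain ⟨f, b, hjf, hKf⟩ := ColoredMultigraph.altWalk_last' hwk
    have hmem : xstar b + xstar w ∈
        {r : ℝ | ∃ e a b, G.Joins e a b ∧ G.isK e ∧ r = xstar a + xstar b} :=
      ⟨f, b, w, hjf, hKf.mpr rfl, rfl⟩
    have h1 : G.utility xstar ≤ xstar b + xstar w := csInf_le hSbdd hmem
    have hxw : xstar w = 0 := hxstar.2.1 w hw0x
    have hxb : xstar b ≤ 1 := by
      by_cases hxB : G.isX b
      · obtain ⟨g, hbmem, hgI⟩ := hG.2.1 b hxB
        obtain ⟨cvert, hgj⟩ := Sym2.mem_iff_exists.mp hbmem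
        have h2 := hxstar.2.2 g b cvert hgj hgI
        linarith [hxstar.1 cvert]
      · rw [hxstar.2.1 b hxB]; linarith
    linarith
  -- final chain
  rw [hxv, hxu]
  have hs'R : (s' : ℝ) ≤ (P : ℝ) + 1 := by exact_mod_cast hs'_le
  have h1 : (R : ℝ) / ((R : ℝ) + ((P : ℝ) + 1)) ≤ (R : ℝ) / ((R : ℝ) + (s' : ℝ)) := by
    apply div_le_div_of_nonneg_left hR0.le
    · positivity
    · linarith
  have h2 : (P : ℝ) / ((P : ℝ) + (R : ℝ)) ≤ (P : ℝ) / ((P : ℝ) + (Q : ℝ)) := by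
    rcases Nat.eq_zero_or_pos P with h | h
    · simp [h]
    · have hP0 : (0 : ℝ) < (P : ℝ) := by exact_mod_cast h
      apply div_le_div_of_nonneg_left hP0.le (by positivity)
      have : (Q : ℝ) ≤ (R : ℝ) := by exact_mod_cast hQ_le
      linarith
  have h3 : 1 - 1 / (R : ℝ) ≤ (R : ℝ) / ((R : ℝ) + ((P : ℝ) + 1)) + (P : ℝ) / ((P : ℝ) + (R : ℝ)) :=
    stmt14_real_ineq (by exact_mod_cast hR) (Nat.cast_nonneg P)
  have hfrac : 1 - 1 / (R : ℝ) ≤ (R : ℝ) / ((R : ℝ) + (s' : ℝ)) + (P : ℝ) / ((P : ℝ) + (Q : ℝ)) := by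
    linarith
  have hcoef : 0 ≤ 1 - 1 / (R : ℝ) := by
    have : 1 / (R : ℝ) ≤ 1 := by
      rw [div_le_one hR0]; exact_mod_cast hR
    linarith
  calc (1 - 1 / (R : ℝ)) * G.utility xstar ≤ (1 - 1 / (R : ℝ)) * 1 :=
        mul_le_mul_of_nonneg_left hw1 hcoef
    _ = 1 - 1 / (R : ℝ) := mul_one _
    _ ≤ _ := hfrac
end
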